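/- If X and Y are strictly subresonance polynomial self-maps of ℝ^n, then the composition (id + X) ∘ (id + Y) equals id + Z for some strictly subresonance polynomial self-map Z of ℝ^n; that is, the maps of the form identity plus a strictly subresonance polynomial self-map are closed under composition. -/

import Mathlib

open MvPolynomial

/-- The minimum of the weights `w : Fin n → ℝ` (for `n ≥ 1`). -/
noncomputable def wmin {n : ℕ} (hn : 1 ≤ n) (w : Fin n → ℝ) : ℝ :=
  Finset.univ.inf' (Finset.univ_nonempty_iff.mpr ⟨⟨0, hn⟩⟩) w

/-- The maximum of the weights `w : Fin n → ℝ` (for `n ≥ 1`). -/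
noncomputable def wmax {n : ℕ} (hn : 1 ≤ n) (w : Fin n → ℝ) : ℝ :=
  Finset.univ.sup' (Finset.univ_nonempty_iff.mpr ⟨⟨0, hn⟩⟩) w

/-- The defect of the monomial with exponent multi-index `d` occurring in the
`i`-th component: `w i − Σ_j (d j)·(w j)`. -/
noncomputable def defect {n : ℕ} (w : Fin n → ℝ) (i : Fin n) (d : Fin n →₀ ℕ) : ℝ :=
  w i - ∑ j, (d j : ℝ) * w j

/-- An `n`-tuple of polynomials with zero constant coefficients
(a polynomial self-map of `ℝ^n`). -/
def IsPolySelfMap {n : ℕ} (P : Fin n → MvPolynomial (Fin n) ℝ) : Prop :=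
  ∀ i, MvPolynomial.constantCoeff (P i) = 0

/-- `P` is strictly subresonance: every monomial occurring with nonzero
coefficient in each component has defect `≤ wmax`. -/
def StrictSubresonanceDefects {n : ℕ} (hn : 1 ≤ n) (w : Fin n → ℝ)
    (P : Fin n → MvPolynomial (Fin n) ℝ) : Prop :=
  ∀ i, ∀ d ∈ (P i).support, defect w i d ≤ wmax hn w

/-!
Give the monomial `x^d` the weight `Σ_j d j • w j`, so that `X j` has weight `w j`. Strict
subresonance of `P` says exactly that `P i` only contains monomials of weight at least
`w i - wmax`, and since `wmax < 0` each `X j + B j` only contains monomials of weight at least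
`w j`. Polynomials whose monomials have weight at least `a` form a decreasing filtration
compatible with multiplication, so substituting `X j + B j` for `X j` preserves every such
lower bound. Hence `Z i = B i + A i(X + B)` is strictly subresonance.
-/

namespace MvPolynomial

section WeightFiltration

variable (R : Type*) {σ M : Type*} [CommSemiring R] [AddCommMonoid M] [PartialOrder M]
  (w : σ → M)

noncomputable def weightFiltration (a : M) : Submodule R (MvPolynomial σ R) :=
  restrictSupport R {d | a ≤ Finsupp.weight w d}

variable {R w}

theorem mem_weightFiltration {a : M} {p : MvPolynomial σ R} :
    p ∈ weightFiltration R w a ↔ ∀ d ∈ p.support, a ≤ Finsupp.weight w d :=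
  Iff.rfl

theorem weightFiltration_antitone : Antitone (weightFiltration R w) :=
  fun _ _ hab => restrictSupport_mono R fun _ hd => le_trans hab hd

theorem X_mem_weightFiltration (j : σ) : (X j : MvPolynomial σ R) ∈ weightFiltration R w (w j) :=
  (monomial_mem_restrictSupport R).2 <| .inl <| by simp [Finsupp.weight_single]

variable [IsOrderedAddMonoid M]

instance weightFiltration.gradedMonoid : SetLike.GradedMonoid (weightFiltration R w) where
  one_mem := (monomial_mem_restrictSupport R).2 <| .inl <| by simp
  mul_mem {a b p q} hp hq := by
    refine restrictSupport_mono R ?_ (restrictSupport_add R _ _ ▸ Submodule.mul_mem_mul hp hq)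
    rintro _ ⟨d, hd, e, he, rfl⟩
    simpa using add_le_add hd he

theorem bind₁_mem_weightFiltration {f : σ → MvPolynomial σ R}
    (hf : ∀ j, f j ∈ weightFiltration R w (w j)) {a : M} {p : MvPolynomial σ R}
    (hp : p ∈ weightFiltration R w a) : bind₁ f p ∈ weightFiltration R w a := by
  classical
  rw [p.as_sum, map_sum]
  refine Submodule.sum_mem _ fun d hd => ?_
  rw [bind₁_monomial, ← smul_eq_C_mul]
  refine Submodule.smul_mem _ _ (weightFiltration_antitone (mem_weightFiltration.1 hp d hd) ?_)
  rw [Finsupp.weight_apply]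
  exact SetLike.prod_mem_graded _ _ _ fun j _ => SetLike.pow_mem_graded _ (hf j)

end WeightFiltration

theorem constantCoeff_bind₁ {σ τ R : Type*} [CommSemiring R] {f : σ → MvPolynomial τ R}
    (hf : ∀ j, constantCoeff (f j) = 0) (p : MvPolynomial σ R) :
    constantCoeff (bind₁ f p) = constantCoeff p := by
  have h : constantCoeff.comp (bind₁ f : MvPolynomial σ R →ₐ[R] _).toRingHom = constantCoeff :=
    ringHom_ext (by simp) (by simp [hf])
  exact RingHom.congr_fun h p

end MvPolynomial

theorem defect_eq_sub_weight {n : ℕ} (w : Fin n → ℝ) (i : Fin n) (d : Fin n →₀ ℕ) :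
    defect w i d = w i - Finsupp.weight w d := by
  simp [defect, Finsupp.weight_eq_sum]

theorem wmax_neg {n : ℕ} (hn : 1 ≤ n) {w : Fin n → ℝ} (hw : ∀ j, w j < 0) : wmax hn w < 0 :=
  (Finset.sup'_lt_iff _).2 fun j _ => hw j

theorem strictSubresonanceDefects_iff {n : ℕ} (hn : 1 ≤ n) (w : Fin n → ℝ)
    (P : Fin n → MvPolynomial (Fin n) ℝ) :
    StrictSubresonanceDefects hn w P ↔ ∀ i, P i ∈ weightFiltration ℝ w (w i - wmax hn w) := by
  simp only [StrictSubresonanceDefects, mem_weightFiltration, defect_eq_sub_weight, sub_le_comm]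

/-- If `A` and `B` are strictly subresonance polynomial self-maps of
`ℝ^n`, then the composition `(id + A) ∘ (id + B)` equals `id + Z` for some strictly
subresonance polynomial self-map `Z` of `ℝ^n`. -/
theorem id_add_strict_subresonance_comp (n : ℕ) (hn : 1 ≤ n) (w : Fin n → ℝ)
    (hw : ∀ j, w j < 0) (A B : Fin n → MvPolynomial (Fin n) ℝ)
    (hA0 : IsPolySelfMap A) (hA : StrictSubresonanceDefects hn w A)
    (hB0 : IsPolySelfMap B) (hB : StrictSubresonanceDefects hn w B) :
    ∃ Z : Fin n → MvPolynomial (Fin n) ℝ,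
      IsPolySelfMap Z ∧ StrictSubresonanceDefects hn w Z ∧
      ∀ i, MvPolynomial.bind₁ (fun j => MvPolynomial.X j + B j)
            (MvPolynomial.X i + A i) = MvPolynomial.X i + Z i := by
  rw [strictSubresonanceDefects_iff] at hA hB
  set f : Fin n → MvPolynomial (Fin n) ℝ := fun j => X j + B j
  have hf : ∀ j, f j ∈ weightFiltration ℝ w (w j) := fun j =>
    add_mem (X_mem_weightFiltration j)
      (weightFiltration_antitone (by linarith [wmax_neg hn hw]) (hB j))
  have hf0 : ∀ j, constantCoeff (f j) = 0 := fun j => by simp [f, hB0 j]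
  refine ⟨fun i => B i + bind₁ f (A i), fun i => ?_, ?_, fun i => ?_⟩
  · simp [constantCoeff_bind₁ hf0, hA0 i, hB0 i]
  · exact (strictSubresonanceDefects_iff hn w _).2 fun i =>
      add_mem (hB i) (bind₁_mem_weightFiltration hf (hA i))
  · simp only [map_add, bind₁_X_right, f]
    ring
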